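/- Let X : [0,T) → ℝ^N be a solution of the gradient flow of F^N_m with X(0) = X_0 and F^N_m(X_0) < 0. Then for all t ∈ [0,T), (1/2)|X(t)|² ≤ (1/2)|X_0|² + (m−1) F^N_m(X_0) t; consequently T ≤ |X_0|² / (2(m−1)(−F^N_m(X_0))), i.e., the solution blows up in finite time. -/

import Mathlib

/-!
`F^N_m` is positively homogeneous of degree `1 - m` on increasing configurations, so Euler's
identity gives `d/dt ½|X|² = -⟪∇F(X), X⟫ = (m - 1) F(X)`. Along its own gradient flow `F`
decreases, hence `½|X(t)|²` decreases at rate at least `(m - 1)(-F(X₀)) > 0`; being nonnegative,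
it forces the lifespan bound `T ≤ |X₀|² / (2 (m - 1)(-F(X₀)))`.
-/

open scoped BigOperators
noncomputable section

/-- Internal (diffusion) part: sum of (X_{i+1} - X_i)^(1-m) over consecutive gaps. -/
def gapSum (m : ℝ) (p : ℕ) (X : EuclideanSpace ℝ (Fin p)) : ℝ :=
  ∑ i : Fin p, if h : (i : ℕ) + 1 < p then (X ⟨(i : ℕ) + 1, h⟩ - X i) ^ (1 - m) else 0

/-- Interaction part: sum of |X_i - X_j|^(1-m) over ordered pairs i ≠ j. -/
def pairSum (m : ℝ) (p : ℕ) (X : EuclideanSpace ℝ (Fin p)) : ℝ :=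
  ∑ i : Fin p, ∑ j : Fin p, if i ≠ j then |X i - X j| ^ (1 - m) else 0

/-- The discrete free energy F^p_m. -/
def FF (m χ : ℝ) (p : ℕ) (X : EuclideanSpace ℝ (Fin p)) : ℝ :=
  (m - 1)⁻¹ * gapSum m p X - (χ / (m - 1)) * pairSum m p X

/-- Membership in R^p: strictly increasing with zero mean. -/
def memR (p : ℕ) (X : EuclideanSpace ℝ (Fin p)) : Prop :=
  (StrictMono fun i => X i) ∧ ∑ i, X i = 0

/-- The critical constant C_p, with 1/C_p the sup of the HLS ratio. -/
def Cp (m : ℝ) (p : ℕ) : ℝ :=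
  (sSup {r : ℝ | ∃ X : EuclideanSpace ℝ (Fin p), memR p X ∧
    r = pairSum m p X / gapSum m p X})⁻¹

/-- The functional F^p_{m,α} with confining quadratic potential. -/
def FFa (m χ α : ℝ) (p : ℕ) (X : EuclideanSpace ℝ (Fin p)) : ℝ :=
  FF m χ p X + α / 2 * ‖X‖ ^ 2

/-- H^N_{m+1}(Y) = |∇F^N_m(Y)|² − ((m−1) F^N_m(Y))². -/
def Hfun (m χ : ℝ) (N : ℕ) (Y : EuclideanSpace ℝ (Fin N)) : ℝ :=
  ‖gradient (FF m χ N) Y‖ ^ 2 - ((m - 1) * FF m χ N Y) ^ 2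

/-- X : [0,T) → R^N is a solution of the gradient flow of F^N_m. -/
def isGFlow (m χ : ℝ) (N : ℕ) (T : ℝ) (X : ℝ → EuclideanSpace ℝ (Fin N)) : Prop :=
  ∀ t ∈ Set.Ico (0 : ℝ) T, memR N (X t) ∧
    HasDerivWithinAt X (-(gradient (FF m χ N) (X t))) (Set.Ico (0 : ℝ) T) t

/-- The gap Y_{i+1} - Y_i (0 if i+1 is out of range). -/
def gapAt (N : ℕ) (Y : EuclideanSpace ℝ (Fin N)) (i : ℕ) : ℝ :=
  if h : i + 1 < N then Y ⟨i + 1, h⟩ - Y ⟨i, Nat.lt_of_succ_lt h⟩ else 0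

open scoped RealInnerProductSpace
open Set

theorem HasFDerivAt.apply_self_eq_of_homogeneous {E : Type*} [NormedAddCommGroup E]
    [NormedSpace ℝ E] {f : E → ℝ} {f' : E →L[ℝ] ℝ} {Y : E} {p : ℝ} (hf : HasFDerivAt f f' Y)
    (hhom : ∀ c : ℝ, 0 < c → f (c • Y) = c ^ p * f Y) :
    f' Y = p * f Y := by
  have hray : HasDerivAt (fun c : ℝ => c • Y) Y 1 := by
    simpa using (hasDerivAt_id (1 : ℝ)).smul_const Y
  have hcomp : HasDerivAt (fun c : ℝ => f (c • Y)) (f' Y) 1 :=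
    hf.comp_hasDerivAt_of_eq 1 hray (one_smul ℝ Y).symm
  have hpow : HasDerivAt (fun c : ℝ => c ^ p * f Y) (p * f Y) 1 := by
    simpa using (Real.hasDerivAt_rpow_const (p := p) (Or.inl one_ne_zero)).mul_const (f Y)
  have heq : (fun c : ℝ => f (c • Y)) =ᶠ[nhds 1] fun c => c ^ p * f Y := by
    filter_upwards [Ioi_mem_nhds zero_lt_one] with c hc
    exact hhom c hc
  exact hcomp.unique (hpow.congr_of_eventuallyEq heq)

theorem Convex.antitoneOn_of_hasDerivWithinAt_nonpos {D : Set ℝ} (hD : Convex ℝ D)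
    {f f' : ℝ → ℝ} (hf : ∀ x ∈ D, HasDerivWithinAt f (f' x) D x)
    (hf' : ∀ x ∈ interior D, f' x ≤ 0) : AntitoneOn f D :=
  _root_.antitoneOn_of_hasDerivWithinAt_nonpos hD (fun x hx => (hf x hx).continuousWithinAt)
    (fun x hx => (hf x (interior_subset hx)).mono interior_subset) hf'

theorem le_div_of_forall_mem_Ico_mul_le {a b T : ℝ} (ha : 0 ≤ a) (hb : 0 < b)
    (h : ∀ t ∈ Ico 0 T, b * t ≤ a) : T ≤ a / b := by
  by_contra! hT
  have hab : 0 ≤ a / b := div_nonneg ha hb.le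
  have hmid := h ((a / b + T) / 2) ⟨by linarith, by linarith⟩
  rw [← le_div_iff₀' hb] at hmid
  linarith

section GradientFlow

variable {E : Type*} [NormedAddCommGroup E] [InnerProductSpace ℝ E] [CompleteSpace E]
  {f : E → ℝ} {X : ℝ → E} {s : Set ℝ} {t : ℝ}

theorem HasDerivWithinAt.comp_of_gradientFlow (hf : DifferentiableAt ℝ f (X t))
    (hX : HasDerivWithinAt X (-gradient f (X t)) s t) :
    HasDerivWithinAt (f ∘ X) (-‖gradient f (X t)‖ ^ 2) s t := by
  have h := hf.hasFDerivAt.comp_hasDerivWithinAt t hX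
  rwa [map_neg, ← inner_gradient_left, real_inner_self_eq_norm_sq] at h

theorem HasDerivWithinAt.half_norm_sq_of_gradientFlow
    (hX : HasDerivWithinAt X (-gradient f (X t)) s t) :
    HasDerivWithinAt (fun t => 1 / 2 * ‖X t‖ ^ 2) (-⟪gradient f (X t), X t⟫) s t := by
  refine (hX.norm_sq.const_mul (1 / 2)).congr_deriv ?_
  rw [inner_neg_right, real_inner_comm]
  ring

end GradientFlow

section FreeEnergy

variable {m χ : ℝ} {p : ℕ} {Y : EuclideanSpace ℝ (Fin p)}

theorem gapSum_smul (hY : Monotone fun i => Y i) {c : ℝ} (hc : 0 ≤ c) :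
    gapSum m p (c • Y) = c ^ (1 - m) * gapSum m p Y := by
  rw [gapSum, gapSum, Finset.mul_sum]
  refine Finset.sum_congr rfl fun i _ => ?_
  split_ifs with h
  · have hle : Y i ≤ Y ⟨(i : ℕ) + 1, h⟩ := hY (Fin.le_def.2 (Nat.le_succ _))
    simp only [PiLp.smul_apply, smul_eq_mul]
    rw [← mul_sub, Real.mul_rpow hc (sub_nonneg.2 hle)]
  · rw [mul_zero]

theorem pairSum_smul {c : ℝ} (hc : 0 ≤ c) :
    pairSum m p (c • Y) = c ^ (1 - m) * pairSum m p Y := by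
  rw [pairSum, pairSum, Finset.mul_sum]
  refine Finset.sum_congr rfl fun i _ => ?_
  rw [Finset.mul_sum]
  refine Finset.sum_congr rfl fun j _ => ?_
  split_ifs
  · simp only [PiLp.smul_apply, smul_eq_mul]
    rw [← mul_sub, abs_mul, abs_of_nonneg hc, Real.mul_rpow hc (abs_nonneg _)]
  · rw [mul_zero]

theorem FF_smul (hY : Monotone fun i => Y i) {c : ℝ} (hc : 0 ≤ c) :
    FF m χ p (c • Y) = c ^ (1 - m) * FF m χ p Y := by
  rw [FF, FF, gapSum_smul hY hc, pairSum_smul hc]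
  ring

theorem differentiableAt_gapSum (hY : StrictMono fun i => Y i) :
    DifferentiableAt ℝ (gapSum m p) Y := by
  refine DifferentiableAt.fun_sum fun i _ => ?_
  split_ifs with h
  · have hlt : Y i < Y ⟨(i : ℕ) + 1, h⟩ := hY (Fin.lt_def.2 (Nat.lt_succ_self _))
    exact ((EuclideanSpace.proj _).differentiableAt.sub
      (EuclideanSpace.proj i).differentiableAt).rpow_const (Or.inl (sub_pos.2 hlt).ne')
  · exact differentiableAt_const 0

theorem differentiableAt_pairSum (hY : Function.Injective fun i => Y i) :
    DifferentiableAt ℝ (pairSum m p) Y := by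
  refine DifferentiableAt.fun_sum fun i _ => DifferentiableAt.fun_sum fun j _ => ?_
  split_ifs with h
  · have hne : Y i - Y j ≠ 0 := sub_ne_zero.2 fun he => h (hY he)
    exact ((differentiableAt_abs hne).comp Y ((EuclideanSpace.proj i).differentiableAt.sub
      (EuclideanSpace.proj j).differentiableAt)).rpow_const (Or.inl (by exact abs_ne_zero.2 hne))
  · exact differentiableAt_const 0

theorem differentiableAt_FF (hY : StrictMono fun i => Y i) :
    DifferentiableAt ℝ (FF m χ p) Y :=
  ((differentiableAt_gapSum hY).const_mul _).sub
    ((differentiableAt_pairSum hY.injective).const_mul _)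

theorem inner_gradient_FF_self (hY : StrictMono fun i => Y i) :
    ⟪gradient (FF m χ p) Y, Y⟫ = (1 - m) * FF m χ p Y := by
  rw [inner_gradient_left]
  exact (differentiableAt_FF hY).hasFDerivAt.apply_self_eq_of_homogeneous
    fun c hc => FF_smul hY.monotone hc.le

end FreeEnergy

section Flow

variable {m χ T : ℝ} {N : ℕ} {X : ℝ → EuclideanSpace ℝ (Fin N)}

theorem isGFlow.FF_le_FF_zero (hflow : isGFlow m χ N T X) {t : ℝ} (ht : t ∈ Ico 0 T) :
    FF m χ N (X t) ≤ FF m χ N (X 0) := by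
  have hanti : AntitoneOn (FF m χ N ∘ X) (Ico 0 T) :=
    (convex_Ico 0 T).antitoneOn_of_hasDerivWithinAt_nonpos
      (fun u hu => ((hflow u hu).2).comp_of_gradientFlow (differentiableAt_FF (hflow u hu).1.1))
      fun u _ => neg_nonpos.2 (sq_nonneg _)
  exact hanti ⟨le_rfl, ht.1.trans_lt ht.2⟩ ht ht.1

theorem isGFlow.half_norm_sq_le (hm : 1 ≤ m) (hflow : isGFlow m χ N T X) {t : ℝ}
    (ht : t ∈ Ico 0 T) :
    1 / 2 * ‖X t‖ ^ 2 ≤ 1 / 2 * ‖X 0‖ ^ 2 + (m - 1) * FF m χ N (X 0) * t := by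
  have hderiv : ∀ u ∈ Ico 0 T, HasDerivWithinAt
      (fun u => 1 / 2 * ‖X u‖ ^ 2 - (m - 1) * FF m χ N (X 0) * u)
      ((m - 1) * (FF m χ N (X u) - FF m χ N (X 0))) (Ico 0 T) u := by
    intro u hu
    have hnorm := ((hflow u hu).2).half_norm_sq_of_gradientFlow
    rw [inner_gradient_FF_self (hflow u hu).1.1] at hnorm
    have hlin := (hasDerivWithinAt_id u (Ico 0 T)).const_mul ((m - 1) * FF m χ N (X 0))
    refine (hnorm.sub hlin).congr_deriv ?_
    ring
  have hanti := (convex_Ico 0 T).antitoneOn_of_hasDerivWithinAt_nonpos hderiv fun u hu =>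
    mul_nonpos_of_nonneg_of_nonpos (sub_nonneg.2 hm)
      (sub_nonpos.2 (hflow.FF_le_FF_zero (interior_subset hu)))
  have := hanti ⟨le_rfl, ht.1.trans_lt ht.2⟩ ht ht.1
  simp only [mul_zero, sub_zero] at this
  linarith

end Flow

theorem stmt12_general (N : ℕ) (m χ : ℝ) (hm : 1 < m)
    (T : ℝ) (X : ℝ → EuclideanSpace ℝ (Fin N))
    (hflow : isGFlow m χ N T X) (hneg : FF m χ N (X 0) < 0) :
    (∀ t ∈ Set.Ico (0 : ℝ) T,
      (1 / 2) * ‖X t‖ ^ 2 ≤ (1 / 2) * ‖X 0‖ ^ 2 + (m - 1) * FF m χ N (X 0) * t) ∧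
    T ≤ ‖X 0‖ ^ 2 / (2 * (m - 1) * (-(FF m χ N (X 0)))) := by
  have hdecay := fun t (ht : t ∈ Ico 0 T) => hflow.half_norm_sq_le hm.le ht
  refine ⟨hdecay, ?_⟩
  have hrate : 0 < (m - 1) * -FF m χ N (X 0) := mul_pos (sub_pos.2 hm) (neg_pos.2 hneg)
  have hT := le_div_of_forall_mem_Ico_mul_le (a := ‖X 0‖ ^ 2 / 2) (by positivity) hrate
    fun t ht => by linarith [hdecay t ht, sq_nonneg ‖X t‖]
  rwa [div_div, ← mul_assoc] at hT

theorem stmt12 (N : ℕ) (hN : 2 ≤ N) (m χ : ℝ) (hm : 1 < m) (hχ : 0 < χ)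
    (T : ℝ) (hT : 0 < T) (X : ℝ → EuclideanSpace ℝ (Fin N))
    (hflow : isGFlow m χ N T X) (hneg : FF m χ N (X 0) < 0) :
    (∀ t ∈ Set.Ico (0 : ℝ) T,
      (1 / 2) * ‖X t‖ ^ 2 ≤ (1 / 2) * ‖X 0‖ ^ 2 + (m - 1) * FF m χ N (X 0) * t) ∧
    T ≤ ‖X 0‖ ^ 2 / (2 * (m - 1) * (-(FF m χ N (X 0)))) :=
  stmt12_general N m χ hm T X hflow hneg
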